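/- Let g: R^3 -> [0, infinity) be Schur-concave with X_1 >= X_2 >= X_3, X_2 < M_13 := (X_1 + X_3)/2, and let delta >= 0, with all integrals below finite and positive. Define p_12^delta = (integral over [0, inf) of e^{delta z} g(X_1 + z, X_2 - z, X_3) dz) / (integral over [-D_12, inf) of e^{delta z} g(X_1 + z, X_2 - z, X_3) dz) and p_13^delta = (integral over [0, inf) of e^{delta z} g(X_1 + z, X_2, X_3 - z) dz) / (integral over [-D_13, inf) of e^{delta z} g(X_1 + z, X_2, X_3 - z) dz), with D_12 = (X_1 - X_2)/2 and D_13 = (X_1 - X_3)/2. Then p_12^delta >= p_13^delta. -/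
import Mathlib

open MeasureTheory

/-- The decreasing rearrangement of a tuple of reals. -/
noncomputable def decSort {n : ℕ} (a : Fin n → ℝ) : Fin n → ℝ :=
  a ∘ Tuple.sort (fun i => -a i)

lemma decSort_antitone {n : ℕ} (a : Fin n → ℝ) : Antitone (decSort a) := by
  have h := Tuple.monotone_sort (fun i => -(a i))
  intro i j hij
  have := h hij
  simp only [Function.comp_apply] at this
  simpa [decSort] using this

lemma decSort_le_max3 (a : Fin 3 → ℝ) (j : Fin 3) : a j ≤ decSort a 0 := by
  set σ := Tuple.sort (fun i => -(a i))
  have : decSort a (σ⁻¹ j) = a j := by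
    simp [decSort, σ]
  rw [← this]
  exact decSort_antitone a (Fin.zero_le _)

lemma min3_le_decSort (a : Fin 3 → ℝ) (j : Fin 3) : decSort a 2 ≤ a j := by
  set σ := Tuple.sort (fun i => -(a i))
  have : decSort a (σ⁻¹ j) = a j := by
    simp [decSort, σ]
  rw [← this]
  exact decSort_antitone a (Fin.le_last _)

lemma decSort_mem (a : Fin 3 → ℝ) (i : Fin 3) :
    decSort a i = a 0 ∨ decSort a i = a 1 ∨ decSort a i = a 2 := by
  set σ := Tuple.sort (fun i => -(a i))
  have : decSort a i = a (σ i) := rfl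
  rw [this]
  obtain ⟨j, hj⟩ : ∃ j : Fin 3, σ i = j := ⟨σ i, rfl⟩
  rw [hj]
  fin_cases j <;> simp

lemma decSort_zero (a : Fin 3 → ℝ) : decSort a 0 = max (max (a 0) (a 1)) (a 2) := by
  apply le_antisymm
  · rcases decSort_mem a 0 with h | h | h <;> rw [h]
    · exact le_max_of_le_left (le_max_left _ _)
    · exact le_max_of_le_left (le_max_right _ _)
    · exact le_max_right _ _
  · exact max_le (max_le (decSort_le_max3 a 0) (decSort_le_max3 a 1)) (decSort_le_max3 a 2)

lemma decSort_two (a : Fin 3 → ℝ) : decSort a 2 = min (min (a 0) (a 1)) (a 2) := by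
  apply le_antisymm
  · exact le_min (le_min (min3_le_decSort a 0) (min3_le_decSort a 1)) (min3_le_decSort a 2)
  · rcases decSort_mem a 2 with h | h | h <;> rw [h]
    · exact min_le_of_left_le (min_le_left _ _)
    · exact min_le_of_left_le (min_le_right _ _)
    · exact min_le_right _ _

lemma decSort_sum (a : Fin 3 → ℝ) :
    decSort a 0 + decSort a 1 + decSort a 2 = a 0 + a 1 + a 2 := by
  have : ∑ i, a (Tuple.sort (fun i => -(a i)) i) = ∑ i, a i :=
    Equiv.sum_comp _ a
  rw [Fin.sum_univ_three, Fin.sum_univ_three] at this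
  simpa [decSort] using this

/-- `a` majorizes `b`: partial sums of decreasing rearrangements dominate, total sums equal. -/
noncomputable def Majorizes {n : ℕ} (a b : Fin n → ℝ) : Prop :=
  (∀ k : ℕ, k < n →
      ∑ j ∈ Finset.univ.filter (fun j : Fin n => (j : ℕ) < k), decSort a j ≥
        ∑ j ∈ Finset.univ.filter (fun j : Fin n => (j : ℕ) < k), decSort b j) ∧
  ∑ j, a j = ∑ j, b j

lemma filter_lt_one :
    Finset.univ.filter (fun j : Fin 3 => (j : ℕ) < 1) = {0} := by decide

lemma filter_lt_two :
    Finset.univ.filter (fun j : Fin 3 => (j : ℕ) < 2) = {0, 1} := by decide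

lemma maj_of (a b : Fin 3 → ℝ)
    (hsum : a 0 + a 1 + a 2 = b 0 + b 1 + b 2)
    (hmax : max (max (b 0) (b 1)) (b 2) ≤ max (max (a 0) (a 1)) (a 2))
    (hmin : min (min (a 0) (a 1)) (a 2) ≤ min (min (b 0) (b 1)) (b 2)) :
    Majorizes a b := by
  constructor
  · intro k hk
    interval_cases k
    · simp
    · rw [filter_lt_one]
      simp only [Finset.sum_singleton]
      rw [decSort_zero, decSort_zero]
      exact hmax
    · rw [filter_lt_two]
      rw [Finset.sum_insert (by decide), Finset.sum_singleton,
          Finset.sum_insert (by decide), Finset.sum_singleton]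
      have ha := decSort_sum a
      have hb := decSort_sum b
      have ha2 := decSort_two a
      have hb2 := decSort_two b
      linarith
  · rw [Fin.sum_univ_three, Fin.sum_univ_three]
    exact hsum

lemma maj_pos (X₁ X₂ X₃ z : ℝ) (h12 : X₁ ≥ X₂) (h23 : X₂ ≥ X₃) (hz : 0 ≤ z) :
    Majorizes ![X₁ + z, X₂, X₃ - z] ![X₁ + z, X₂ - z, X₃] := by
  apply maj_of <;>
    simp only [Matrix.cons_val_zero, Matrix.cons_val_one, Matrix.head_cons,
      Matrix.cons_val_two, Matrix.tail_cons]
  · ring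
  · exact max_le (max_le (le_trans (le_max_left _ _) (le_max_left _ _))
      (le_trans (by linarith : X₂ - z ≤ X₁ + z) (le_trans (le_max_left _ _) (le_max_left _ _))))
      (le_trans (by linarith : X₃ ≤ X₁ + z) (le_trans (le_max_left _ _) (le_max_left _ _)))
  · exact le_trans (min_le_right _ _)
      (le_min (le_min (by linarith) (by linarith)) (by linarith))

lemma maj_neg (X₁ X₂ X₃ z : ℝ) (h12 : X₁ ≥ X₂) (h23 : X₂ ≥ X₃)
    (hz1 : -((X₁ - X₂) / 2) ≤ z) (hz2 : z ≤ 0) :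
    Majorizes ![X₁ + z, X₂ - z, X₃] ![X₁ + z, X₂, X₃ - z] := by
  apply maj_of <;>
    simp only [Matrix.cons_val_zero, Matrix.cons_val_one, Matrix.head_cons,
      Matrix.cons_val_two, Matrix.tail_cons]
  · ring
  · exact max_le (max_le (le_trans (le_max_left _ _) (le_max_left _ _))
      (le_trans (by linarith : X₂ ≤ X₁ + z) (le_trans (le_max_left _ _) (le_max_left _ _))))
      (le_trans (by linarith : X₃ - z ≤ X₁ + z) (le_trans (le_max_left _ _) (le_max_left _ _)))
  · exact le_trans (min_le_right _ _)
      (le_min (le_min (by linarith) (by linarith)) (by linarith))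

/-- `g` is Schur-concave if majorization reverses its ordering. -/
noncomputable def SchurConcave {n : ℕ} (g : (Fin n → ℝ) → ℝ) : Prop :=
  ∀ x y : Fin n → ℝ, Majorizes x y → g x ≤ g y

/-- The tilted winner-versus-runner-up p-value is the largest: `p₁₂^δ ≥ p₁₃^δ`. -/
theorem tilted_pvalue_comparison (g : (Fin 3 → ℝ) → ℝ) (hg : SchurConcave g)
    (hpos : ∀ x, 0 ≤ g x) (X₁ X₂ X₃ δ : ℝ) (h12 : X₁ ≥ X₂) (h23 : X₂ ≥ X₃)
    (hM : X₂ < (X₁ + X₃) / 2) (hδ : 0 ≤ δ)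
    (hint12 : IntegrableOn (fun z => Real.exp (δ * z) * g ![X₁ + z, X₂ - z, X₃])
      (Set.Ici (-((X₁ - X₂) / 2))))
    (hint13 : IntegrableOn (fun z => Real.exp (δ * z) * g ![X₁ + z, X₂, X₃ - z])
      (Set.Ici (-((X₁ - X₃) / 2))))
    (hden12 : 0 < ∫ z in Set.Ici (-((X₁ - X₂) / 2)), Real.exp (δ * z) * g ![X₁ + z, X₂ - z, X₃])
    (hden13 : 0 < ∫ z in Set.Ici (-((X₁ - X₃) / 2)), Real.exp (δ * z) * g ![X₁ + z, X₂, X₃ - z]) :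
    (∫ z in Set.Ici (0 : ℝ), Real.exp (δ * z) * g ![X₁ + z, X₂ - z, X₃]) /
        (∫ z in Set.Ici (-((X₁ - X₂) / 2)), Real.exp (δ * z) * g ![X₁ + z, X₂ - z, X₃]) ≥
      (∫ z in Set.Ici (0 : ℝ), Real.exp (δ * z) * g ![X₁ + z, X₂, X₃ - z]) /
        (∫ z in Set.Ici (-((X₁ - X₃) / 2)), Real.exp (δ * z) * g ![X₁ + z, X₂, X₃ - z]) := by
  set f12 : ℝ → ℝ := fun z => Real.exp (δ * z) * g ![X₁ + z, X₂ - z, X₃] with hf12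
  set f13 : ℝ → ℝ := fun z => Real.exp (δ * z) * g ![X₁ + z, X₂, X₃ - z] with hf13
  have hD12 : -((X₁ - X₂) / 2) ≤ 0 := by linarith
  have hD13 : -((X₁ - X₃) / 2) ≤ 0 := by linarith
  have hDD : -((X₁ - X₃) / 2) ≤ -((X₁ - X₂) / 2) := by linarith
  have hsub12 : Set.Ici (0 : ℝ) ⊆ Set.Ici (-((X₁ - X₂) / 2)) := Set.Ici_subset_Ici.mpr hD12
  have hsub13 : Set.Ici (0 : ℝ) ⊆ Set.Ici (-((X₁ - X₃) / 2)) := Set.Ici_subset_Ici.mpr hD13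
  have int12_0 : IntegrableOn f12 (Set.Ici 0) := hint12.mono_set hsub12
  have int13_0 : IntegrableOn f13 (Set.Ici 0) := hint13.mono_set hsub13
  have int12_I : IntegrableOn f12 (Set.Ico (-((X₁ - X₂) / 2)) 0) :=
    hint12.mono_set Set.Ico_subset_Ici_self
  have int13_I : IntegrableOn f13 (Set.Ico (-((X₁ - X₂) / 2)) 0) :=
    hint13.mono_set (Set.Ico_subset_Ici_self.trans (Set.Ici_subset_Ici.mpr hDD))
  have int13_I' : IntegrableOn f13 (Set.Ico (-((X₁ - X₃) / 2)) 0) :=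
    hint13.mono_set Set.Ico_subset_Ici_self
  have hdisj : ∀ a : ℝ, Disjoint (Set.Ico a 0) (Set.Ici (0 : ℝ)) := fun a =>
    Set.disjoint_left.mpr fun x hx hx' => hx.2.not_ge hx'
  have split12 : (∫ z in Set.Ici (-((X₁ - X₂) / 2)), f12 z) =
      (∫ z in Set.Ico (-((X₁ - X₂) / 2)) 0, f12 z) + ∫ z in Set.Ici 0, f12 z := by
    rw [← setIntegral_union (hdisj _) measurableSet_Ici int12_I int12_0,
      Set.Ico_union_Ici_eq_Ici hD12]
  have split13 : (∫ z in Set.Ici (-((X₁ - X₃) / 2)), f13 z) =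
      (∫ z in Set.Ico (-((X₁ - X₃) / 2)) 0, f13 z) + ∫ z in Set.Ici 0, f13 z := by
    rw [← setIntegral_union (hdisj _) measurableSet_Ici int13_I' int13_0,
      Set.Ico_union_Ici_eq_Ici hD13]
  have hN : (∫ z in Set.Ici 0, f13 z) ≤ ∫ z in Set.Ici 0, f12 z := by
    apply setIntegral_mono_on int13_0 int12_0 measurableSet_Ici
    intro z hz
    exact mul_le_mul_of_nonneg_left (hg _ _ (maj_pos X₁ X₂ X₃ z h12 h23 hz))
      (Real.exp_nonneg _)
  have hT : (∫ z in Set.Ico (-((X₁ - X₂) / 2)) 0, f12 z) ≤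
      ∫ z in Set.Ico (-((X₁ - X₃) / 2)) 0, f13 z := by
    have step1 : (∫ z in Set.Ico (-((X₁ - X₂) / 2)) 0, f12 z) ≤
        ∫ z in Set.Ico (-((X₁ - X₂) / 2)) 0, f13 z := by
      apply setIntegral_mono_on int12_I int13_I measurableSet_Ico
      intro z hz
      exact mul_le_mul_of_nonneg_left (hg _ _ (maj_neg X₁ X₂ X₃ z h12 h23 hz.1 hz.2.le))
        (Real.exp_nonneg _)
    have step2 : (∫ z in Set.Ico (-((X₁ - X₂) / 2)) 0, f13 z) ≤
        ∫ z in Set.Ico (-((X₁ - X₃) / 2)) 0, f13 z := by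
      apply setIntegral_mono_set int13_I'
        (ae_of_all _ fun x => mul_nonneg (Real.exp_nonneg _) (hpos _))
      exact Filter.Eventually.of_forall fun x hx => ⟨le_trans hDD hx.1, hx.2⟩
    exact step1.trans step2
  have hN12 : 0 ≤ ∫ z in Set.Ici 0, f12 z :=
    setIntegral_nonneg measurableSet_Ici fun x _ => mul_nonneg (Real.exp_nonneg _) (hpos _)
  have hN13 : 0 ≤ ∫ z in Set.Ici 0, f13 z :=
    setIntegral_nonneg measurableSet_Ici fun x _ => mul_nonneg (Real.exp_nonneg _) (hpos _)
  have hT12 : 0 ≤ ∫ z in Set.Ico (-((X₁ - X₂) / 2)) 0, f12 z :=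
    setIntegral_nonneg measurableSet_Ico fun x _ => mul_nonneg (Real.exp_nonneg _) (hpos _)
  rw [ge_iff_le, div_le_div_iff₀ hden13 hden12]
  rw [split12, split13] at *
  nlinarith [mul_le_mul hN hT hT12 hN12]
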